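/- arXiv:1312.3805 — 2 statements merged into one kernel-verified Lean document; each statement's English description precedes it below -/
import Mathlib

section
/- Let A be a real n×n nonsingular matrix all of whose leading principal submatrices A^{(j)}, j = 1,…,n, are nonsingular. Write N = ‖A‖ and N₋ = max_{j=1,…,n} ‖(A^{(j)})⁻¹‖. Then for all 0 < h < k ≤ n, the Schur complement S = S(A^{(h)}, A^{(k)}) satisfies ‖S‖ ≤ N + N₋N² and ‖S⁻¹‖ ≤ N₋; in particular the norms of all pivot blocks arising in GENP or block Gaussian elimination applied to A are at most N + N₋N², and the norms of their inverses are at most N₋. -/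
/-!
A Schur complement is controlled by its ambient matrix `M = [[B, C], [D, E]]` in both directions.
Directly, `‖E - D B⁻¹ C‖ ≤ ‖E‖ + ‖D‖ ‖B⁻¹‖ ‖C‖ ≤ ‖M‖ + ‖B⁻¹‖ ‖M‖²`, since the spectral norm
does not increase when passing to a submatrix. For the inverse, `(E - D B⁻¹ C)⁻¹` is the
south-eastern block of `M⁻¹`, so its norm is at most `‖M⁻¹‖`. Now take `M = A^{(k)}`, itself a
submatrix of `A`, and `B = A^{(h)}`.
-/

open Matrix MeasureTheory ProbabilityTheory

/-- The `j`-th largest singular value (1-indexed; `0` for `j` out of range). -/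
noncomputable def sval {m n : ℕ} (A : Matrix (Fin m) (Fin n) ℝ) (j : ℕ) : ℝ :=
  if h : 1 ≤ j ∧ j ≤ n then
    Real.sqrt ((Matrix.isHermitian_conjTranspose_mul_self A).eigenvalues
      (Tuple.sort (Matrix.isHermitian_conjTranspose_mul_self A).eigenvalues ⟨n - j, by omega⟩))
  else 0

/-- The spectral norm of a real matrix. -/
noncomputable def spec {m n : ℕ} (A : Matrix (Fin m) (Fin n) ℝ) : ℝ :=
  ‖LinearMap.toContinuousLinearMap (Matrix.toEuclideanLin A)‖

open Classical in
/-- The Moore–Penrose pseudo-inverse. -/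
noncomputable def pinv {m n : ℕ} (M : Matrix (Fin m) (Fin n) ℝ) : Matrix (Fin n) (Fin m) ℝ :=
  if h : ∃ X : Matrix (Fin n) (Fin m) ℝ,
      M * X * M = M ∧ X * M * X = X ∧ (M * X)ᵀ = M * X ∧ (X * M)ᵀ = X * M
  then h.choose else 0

/-- Leading (northwestern) `k × l` submatrix. -/
def lead {m n : ℕ} (A : Matrix (Fin m) (Fin n) ℝ) (k l : ℕ) (hk : k ≤ m) (hl : l ≤ n) :
    Matrix (Fin k) (Fin l) ℝ :=
  A.submatrix (Fin.castLE hk) (Fin.castLE hl)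

/-- Schur complement of the leading `h × h` block in `A`. -/
noncomputable def schur {n : ℕ} (A : Matrix (Fin n) (Fin n) ℝ) (h : ℕ) (hh : h ≤ n) :
    Matrix (Fin (n - h)) (Fin (n - h)) ℝ :=
  A.submatrix (fun i => (⟨h + i.1, by have := i.isLt; omega⟩ : Fin n))
      (fun j => (⟨h + j.1, by have := j.isLt; omega⟩ : Fin n))
    - A.submatrix (fun i => (⟨h + i.1, by have := i.isLt; omega⟩ : Fin n)) (Fin.castLE hh)
      * (A.submatrix (Fin.castLE hh) (Fin.castLE hh))⁻¹
      * A.submatrix (Fin.castLE hh) (fun j => (⟨h + j.1, by have := j.isLt; omega⟩ : Fin n))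

/-- The distribution of a standard Gaussian random `m × n` matrix (as entrywise functions). -/
noncomputable def stdGaussianM (m n : ℕ) : Measure (Fin m → Fin n → ℝ) :=
  Measure.pi fun _ => Measure.pi fun _ => gaussianReal 0 1

/-- The `m × n` "diagonal" matrix of singular values of `A` in nonincreasing order. -/
noncomputable def svdSigma {m n : ℕ} (A : Matrix (Fin m) (Fin n) ℝ) : Matrix (Fin m) (Fin n) ℝ :=
  Matrix.of fun i j => if (i : ℕ) = (j : ℕ) then sval A ((i : ℕ) + 1) else 0

open scoped Matrix.Norms.L2Operator

namespace Matrix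

variable {𝕜 : Type*} [RCLike 𝕜] {k l m n : Type*} [Fintype k] [Fintype l] [Fintype m]
  [Fintype n] [DecidableEq l] [DecidableEq m] [DecidableEq n]

theorem l2_opNorm_one_submatrix_le_one {f : k → m} (hf : f.Injective) :
    ‖(1 : Matrix m m 𝕜).submatrix f id‖ ≤ 1 := by
  rw [l2_opNorm_def]
  refine ContinuousLinearMap.opNorm_le_bound _ zero_le_one fun x => ?_
  rw [one_mul, EuclideanSpace.norm_eq, EuclideanSpace.norm_eq]
  have hx : (1 : Matrix m m 𝕜).submatrix f id *ᵥ x.ofLp = x.ofLp ∘ f := by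
    simpa using submatrix_mulVec_equiv (1 : Matrix m m 𝕜) x f (Equiv.refl m)
  gcongr
  simp only [LinearEquiv.trans_apply, LinearMap.coe_toContinuousLinearMap', toLpLin_apply,
    hx, Function.comp_apply]
  exact (Finset.sum_map _ ⟨f, hf⟩ fun j => ‖x.ofLp j‖ ^ 2).symm.trans_le
    (Finset.sum_le_univ_sum_of_nonneg fun _ => by positivity)

theorem l2_opNorm_submatrix_le (A : Matrix m n 𝕜) {f : k → m} {g : l → n}
    (hf : f.Injective) (hg : g.Injective) : ‖A.submatrix f g‖ ≤ ‖A‖ := by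
  have hfactor : A.submatrix f g =
      (1 : Matrix m m 𝕜).submatrix f id * A * ((1 : Matrix n n 𝕜).submatrix g id)ᴴ := by
    have hrows := one_submatrix_mul f (Equiv.refl m) A
    have hcols := mul_submatrix_one (Equiv.refl n) g (A.submatrix f id)
    simp only [Equiv.coe_refl, Equiv.refl_symm, Function.id_comp] at hrows hcols
    rw [conjTranspose_submatrix, conjTranspose_one, hrows, hcols, submatrix_submatrix]
    rfl
  calc ‖A.submatrix f g‖
      ≤ ‖(1 : Matrix m m 𝕜).submatrix f id‖ * ‖A‖ * ‖(1 : Matrix n n 𝕜).submatrix g id‖ := by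
        rw [hfactor, ← l2_opNorm_conjTranspose ((1 : Matrix n n 𝕜).submatrix g id)]
        exact (l2_opNorm_mul _ _).trans (by gcongr; exact l2_opNorm_mul _ _)
    _ ≤ 1 * ‖A‖ * 1 := by
        gcongr
        exacts [l2_opNorm_one_submatrix_le_one hf, l2_opNorm_one_submatrix_le_one hg]
    _ = ‖A‖ := by ring

noncomputable def schurComplement₁₁ {α : Type*} [CommRing α] (M : Matrix (l ⊕ m) (l ⊕ m) α) :
    Matrix m m α :=
  M.toBlocks₂₂ - M.toBlocks₂₁ * M.toBlocks₁₁⁻¹ * M.toBlocks₁₂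

theorem inv_schurComplement₁₁ {α : Type*} [CommRing α] (M : Matrix (l ⊕ m) (l ⊕ m) α)
    (h₁₁ : IsUnit M.toBlocks₁₁.det) (hM : IsUnit M.det) :
    M.schurComplement₁₁⁻¹ = M⁻¹.toBlocks₂₂ := by
  let := M.toBlocks₁₁.invertibleOfIsUnitDet h₁₁
  let : Invertible (fromBlocks M.toBlocks₁₁ M.toBlocks₁₂ M.toBlocks₂₁ M.toBlocks₂₂) := by
    rw [fromBlocks_toBlocks]; exact M.invertibleOfIsUnitDet hM
  let := invertibleOfFromBlocks₁₁Invertible M.toBlocks₁₁ M.toBlocks₁₂ M.toBlocks₂₁ M.toBlocks₂₂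
  have h := congrArg toBlocks₂₂
    (invOf_fromBlocks₁₁_eq M.toBlocks₁₁ M.toBlocks₁₂ M.toBlocks₂₁ M.toBlocks₂₂)
  simp only [invOf_eq_nonsing_inv, fromBlocks_toBlocks, toBlocks_fromBlocks₂₂] at h
  exact h.symm

theorem l2_opNorm_schurComplement₁₁_le (M : Matrix (l ⊕ m) (l ⊕ m) 𝕜) :
    ‖M.schurComplement₁₁‖ ≤ ‖M‖ + ‖M.toBlocks₁₁⁻¹‖ * ‖M‖ ^ 2 := by
  have h₁₂ : ‖M.toBlocks₁₂‖ ≤ ‖M‖ :=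
    l2_opNorm_submatrix_le M Sum.inl_injective Sum.inr_injective
  have h₂₁ : ‖M.toBlocks₂₁‖ ≤ ‖M‖ :=
    l2_opNorm_submatrix_le M Sum.inr_injective Sum.inl_injective
  have h₂₂ : ‖M.toBlocks₂₂‖ ≤ ‖M‖ :=
    l2_opNorm_submatrix_le M Sum.inr_injective Sum.inr_injective
  have hprod : ‖M.toBlocks₂₁ * M.toBlocks₁₁⁻¹ * M.toBlocks₁₂‖
      ≤ ‖M.toBlocks₂₁‖ * ‖M.toBlocks₁₁⁻¹‖ * ‖M.toBlocks₁₂‖ :=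
    (l2_opNorm_mul _ _).trans (by gcongr; exact l2_opNorm_mul _ _)
  calc ‖M.schurComplement₁₁‖
      ≤ ‖M.toBlocks₂₂‖ + ‖M.toBlocks₂₁ * M.toBlocks₁₁⁻¹ * M.toBlocks₁₂‖ := norm_sub_le _ _
    _ ≤ ‖M‖ + ‖M‖ * ‖M.toBlocks₁₁⁻¹‖ * ‖M‖ := by gcongr; exact hprod.trans (by gcongr)
    _ = ‖M‖ + ‖M.toBlocks₁₁⁻¹‖ * ‖M‖ ^ 2 := by ring

theorem l2_opNorm_inv_schurComplement₁₁_le (M : Matrix (l ⊕ m) (l ⊕ m) 𝕜)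
    (h₁₁ : IsUnit M.toBlocks₁₁.det) (hM : IsUnit M.det) :
    ‖M.schurComplement₁₁⁻¹‖ ≤ ‖M⁻¹‖ := by
  rw [inv_schurComplement₁₁ M h₁₁ hM]
  exact l2_opNorm_submatrix_le _ Sum.inr_injective Sum.inr_injective

end Matrix

theorem spec_eq_norm {m n : ℕ} (A : Matrix (Fin m) (Fin n) ℝ) : spec A = ‖A‖ := rfl

theorem spec_lead_le {m n : ℕ} (A : Matrix (Fin m) (Fin n) ℝ) (k l : ℕ) (hk : k ≤ m)
    (hl : l ≤ n) : spec (lead A k l hk hl) ≤ spec A :=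
  Matrix.l2_opNorm_submatrix_le A (Fin.castLE_injective hk) (Fin.castLE_injective hl)

def finSplitEquiv {h n : ℕ} (hh : h ≤ n) : Fin h ⊕ Fin (n - h) ≃ Fin n :=
  finSumFinEquiv.trans (finCongr (Nat.add_sub_cancel' hh))

section Schur

variable {n h : ℕ} (M : Matrix (Fin n) (Fin n) ℝ) (hh : h ≤ n)

theorem schur_eq_schurComplement₁₁ :
    schur M h hh = (M.submatrix (finSplitEquiv hh) (finSplitEquiv hh)).schurComplement₁₁ :=
  rfl

theorem spec_schur_le :
    spec (schur M h hh) ≤ spec M + spec (lead M h h hh hh)⁻¹ * spec M ^ 2 := by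
  have hsplit : ‖M.submatrix (finSplitEquiv hh) (finSplitEquiv hh)‖ ≤ ‖M‖ :=
    Matrix.l2_opNorm_submatrix_le _ (finSplitEquiv hh).injective (finSplitEquiv hh).injective
  simp only [spec_eq_norm, schur_eq_schurComplement₁₁]
  exact (Matrix.l2_opNorm_schurComplement₁₁_le _).trans (by gcongr; exact le_rfl)

theorem spec_inv_schur_le (hB : IsUnit (lead M h h hh hh).det) (hM : IsUnit M.det) :
    spec (schur M h hh)⁻¹ ≤ spec M⁻¹ := by
  rw [spec_eq_norm, schur_eq_schurComplement₁₁, spec_eq_norm]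
  refine (Matrix.l2_opNorm_inv_schurComplement₁₁_le
    (M.submatrix (finSplitEquiv hh) (finSplitEquiv hh)) hB
    (by rwa [Matrix.det_submatrix_equiv_self])).trans ?_
  rw [Matrix.inv_submatrix_equiv]
  exact Matrix.l2_opNorm_submatrix_le _ (finSplitEquiv hh).injective (finSplitEquiv hh).injective

end Schur

/-- If all leading blocks of `A` are nonsingular, `N = ‖A‖`, and `N₋` bounds all `‖(A^{(j)})⁻¹‖`,
then every Schur complement `S(A^{(h)}, A^{(k)})` (a pivot block of block Gaussian elimination)
satisfies `‖S‖ ≤ N + N₋N²` and `‖S⁻¹‖ ≤ N₋`; the leading blocks `A^{(k)}` (the remaining pivot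
blocks) satisfy the same bounds. -/
theorem schur_pivot_block_bounds {n : ℕ} (A : Matrix (Fin n) (Fin n) ℝ)
    (hinv : ∀ j (_ : 1 ≤ j) (h2 : j ≤ n), IsUnit (lead A j j h2 h2).det)
    (N Nm : ℝ) (hN : N = spec A)
    (hNm : ∀ j (_ : 1 ≤ j) (h2 : j ≤ n), spec (lead A j j h2 h2)⁻¹ ≤ Nm) :
    (∀ h k (h0 : 0 < h) (hhk : h < k) (hkn : k ≤ n),
      spec (schur (lead A k k hkn hkn) h (by omega)) ≤ N + Nm * N ^ 2 ∧
      spec (schur (lead A k k hkn hkn) h (by omega))⁻¹ ≤ Nm) ∧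
    (∀ k (h0 : 0 < k) (hkn : k ≤ n),
      spec (lead A k k hkn hkn) ≤ N + Nm * N ^ 2 ∧
      spec (lead A k k hkn hkn)⁻¹ ≤ Nm) := by
  have hNm0 : 0 < n → 0 ≤ Nm := fun hn => (norm_nonneg _).trans (hNm 1 le_rfl hn)
  have hlead : ∀ k (hkn : k ≤ n), spec (lead A k k hkn hkn) ≤ N :=
    fun k hkn => hN ▸ spec_lead_le A k k hkn hkn
  refine ⟨fun h k h0 hhk hkn => ⟨?_, ?_⟩, fun k h0 hkn => ⟨?_, hNm k h0 hkn⟩⟩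
  · have := hNm0 (by omega)
    exact (spec_schur_le _ _).trans (add_le_add (hlead k hkn) (mul_le_mul (hNm h h0 (by omega))
      (pow_le_pow_left₀ (norm_nonneg _) (hlead k hkn) 2) (by positivity) this))
  · exact (spec_inv_schur_le (lead A k k hkn hkn) _ (hinv h h0 (by omega))
      (hinv k (by omega) hkn)).trans (hNm k (by omega) hkn)
  · have := hNm0 (by omega)
    exact (hlead k hkn).trans (le_add_of_nonneg_right (by positivity))
end

section
/- Let A be a real m×n matrix of rank ρ with SVD A = S_A Σ_A T_Aᵀ, where S_A and T_A are orthogonal m×m and n×n matrices and Σ_A is the m×n diagonal matrix of singular values in nonincreasing order. Let F be a real r×m matrix and H a real n×r matrix with r ≤ ρ, and set F̂ = F S_A and Ĥ = T_Aᵀ H. Then σ_j(FA) ≥ σ_k(A)·σ_j(F̂_{r,k}) for all k ≤ m and all j, and σ_j(AH) ≥ σ_l(A)·σ_j(Ĥ_{l,r}) for all l ≤ n and all j. -/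
/-!
Both bounds come from one comparison principle for singular values: if `P` is a contraction and
`c ‖X x‖ ≤ ‖Y (P x)‖` for all `x`, then `c σ_j(X) ≤ σ_j(Y)`. Indeed, asking that `x` be orthogonal
to the eigenvectors of `XᵀX` with eigenvalue below `σ_j(X)²` and that `P x` be orthogonal to the
eigenvectors of `YᵀY` with eigenvalue above `σ_j(Y)²` imposes at most `(p - j) + (j - 1)` linear
equations on `x ∈ ℝᵖ`, so some `x ≠ 0` satisfies them, and for it
`c² σ_j(X)² ‖x‖² ≤ c² ‖X x‖² ≤ ‖Y P x‖² ≤ σ_j(Y)² ‖P x‖² ≤ σ_j(Y)² ‖x‖²`.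

For `F A` take `P = T I_{n,k} diag(σ_k(A) / σ_i(A))`, so that `F A P = σ_k(A) F̂_{r,k}`; for `A H`
take `P = 1`, since `‖A H x‖ = ‖Σ_A Ĥ x‖ ≥ σ_l(A) ‖Ĥ_{l,r} x‖`.
-/

open Matrix MeasureTheory ProbabilityTheory

open Finset

theorem exists_ne_zero_forall_dotProduct_eq_zero {K ι n : Type*} [Field K] [Fintype ι]
    [Fintype n] (v : ι → n → K) (h : Fintype.card ι < Fintype.card n) :
    ∃ x ≠ 0, ∀ i, v i ⬝ᵥ x = 0 := by
  have hker : LinearMap.ker (Matrix.of v).mulVecLin ≠ ⊥ :=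
    LinearMap.ker_ne_bot_of_finrank_lt (by simpa using h)
  obtain ⟨x, hx, hx0⟩ := (Submodule.ne_bot_iff _).mp hker
  exact ⟨x, hx0, fun i => congrFun hx i⟩

namespace Tuple

variable {α : Type*} [LinearOrder α] {n : ℕ} (f : Fin n → α) (k : Fin n)

theorem card_lt_apply_sort : #{i | f i < f (sort f k)} ≤ k := by
  calc #{i | f i < f (sort f k)} ≤ #(Iio k) := by
        refine card_le_card_of_injOn (sort f).symm (fun i hi => ?_) (sort f).symm.injective.injOn
        rw [coe_Iio, Set.mem_Iio]
        by_contra! hk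
        exact (monotone_sort f hk).not_gt (by simpa using hi)
    _ = k := Fin.card_Iio k

theorem card_apply_sort_lt : #{i | f (sort f k) < f i} ≤ n - 1 - k := by
  calc #{i | f (sort f k) < f i} ≤ #(Ioi k) := by
        refine card_le_card_of_injOn (sort f).symm (fun i hi => ?_) (sort f).symm.injective.injOn
        rw [coe_Ioi, Set.mem_Ioi]
        by_contra! hk
        exact (monotone_sort f hk).not_gt (by simpa using hi)
    _ = n - 1 - k := Fin.card_Ioi k

end Tuple

theorem OrthonormalBasis.dotProduct_eq_sum {n : Type*} [Fintype n]
    (b : OrthonormalBasis n ℝ (EuclideanSpace ℝ n)) (x y : n → ℝ) :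
    x ⬝ᵥ y = ∑ i, (⇑(b i) ⬝ᵥ x) * (⇑(b i) ⬝ᵥ y) := by
  have h := b.sum_inner_mul_inner (WithLp.toLp 2 x) (WithLp.toLp 2 y)
  simp only [EuclideanSpace.inner_eq_star_dotProduct, star_trivial] at h
  rw [dotProduct_comm, ← h]
  simp only [dotProduct_comm y]

namespace Matrix.IsHermitian

variable {n : Type*} [Fintype n] [DecidableEq n] {M : Matrix n n ℝ} (hM : M.IsHermitian)

theorem eigenvectorBasis_dotProduct_mulVec (i : n) (x : n → ℝ) :
    ⇑(hM.eigenvectorBasis i) ⬝ᵥ (M *ᵥ x) = hM.eigenvalues i * (⇑(hM.eigenvectorBasis i) ⬝ᵥ x) := by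
  have hMt : Mᵀ = M := by rw [← conjTranspose_eq_transpose_of_trivial, hM.eq]
  rw [dotProduct_mulVec, ← mulVec_transpose, hMt, mulVec_eigenvectorBasis, smul_dotProduct,
    smul_eq_mul]

theorem dotProduct_mulVec_eq_sum (x : n → ℝ) :
    x ⬝ᵥ (M *ᵥ x) = ∑ i, hM.eigenvalues i * (⇑(hM.eigenvectorBasis i) ⬝ᵥ x) ^ 2 := by
  rw [hM.eigenvectorBasis.dotProduct_eq_sum]
  refine sum_congr rfl fun i _ => ?_
  rw [eigenvectorBasis_dotProduct_mulVec]
  ring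

theorem mul_dotProduct_self_le_dotProduct_mulVec {t : ℝ} {x : n → ℝ}
    (hx : ∀ i, hM.eigenvalues i < t → ⇑(hM.eigenvectorBasis i) ⬝ᵥ x = 0) :
    t * (x ⬝ᵥ x) ≤ x ⬝ᵥ (M *ᵥ x) := by
  rw [hM.dotProduct_mulVec_eq_sum, hM.eigenvectorBasis.dotProduct_eq_sum, mul_sum]
  refine sum_le_sum fun i _ => ?_
  rcases lt_or_ge (hM.eigenvalues i) t with hi | hi
  · simp [hx i hi]
  · rw [← sq]
    exact mul_le_mul_of_nonneg_right hi (sq_nonneg _)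

theorem dotProduct_mulVec_le_mul_dotProduct_self {t : ℝ} {x : n → ℝ}
    (hx : ∀ i, t < hM.eigenvalues i → ⇑(hM.eigenvectorBasis i) ⬝ᵥ x = 0) :
    x ⬝ᵥ (M *ᵥ x) ≤ t * (x ⬝ᵥ x) := by
  rw [hM.dotProduct_mulVec_eq_sum, hM.eigenvectorBasis.dotProduct_eq_sum, mul_sum]
  refine sum_le_sum fun i _ => ?_
  rcases lt_or_ge t (hM.eigenvalues i) with hi | hi
  · simp [hx i hi]
  · rw [← sq]
    exact mul_le_mul_of_nonneg_right hi (sq_nonneg _)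

end Matrix.IsHermitian

theorem Matrix.dotProduct_mulVec_conjTranspose_mul_self {m n : Type*} [Fintype m] [Fintype n]
    (X : Matrix m n ℝ) (x : n → ℝ) :
    x ⬝ᵥ ((Xᴴ * X) *ᵥ x) = (X *ᵥ x) ⬝ᵥ (X *ᵥ x) := by
  rw [← mulVec_mulVec, dotProduct_mulVec, conjTranspose_eq_transpose_of_trivial,
    vecMul_transpose]

theorem Matrix.dotProduct_self_mulVec_of_transpose_mul_self {R m n : Type*} [CommSemiring R]
    [Fintype m] [Fintype n] [DecidableEq n] {U : Matrix m n R} (hU : Uᵀ * U = 1) (x : n → R) :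
    (U *ᵥ x) ⬝ᵥ (U *ᵥ x) = x ⬝ᵥ x := by
  rw [dotProduct_mulVec, ← mulVec_transpose, mulVec_mulVec, hU, one_mulVec]

section sval

variable {m n : ℕ} (A : Matrix (Fin m) (Fin n) ℝ)

theorem sval_nonneg (j : ℕ) : 0 ≤ sval A j := by
  unfold sval
  split
  · exact Real.sqrt_nonneg _
  · exact le_rfl

theorem sval_eq_zero {j : ℕ} (hj : ¬(1 ≤ j ∧ j ≤ n)) : sval A j = 0 := dif_neg hj

theorem sq_sval {j : ℕ} (hj1 : 1 ≤ j) (hjn : j ≤ n) :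
    sval A j ^ 2 = (isHermitian_conjTranspose_mul_self A).eigenvalues
      (Tuple.sort (isHermitian_conjTranspose_mul_self A).eigenvalues ⟨n - j, by omega⟩) := by
  rw [sval, dif_pos ⟨hj1, hjn⟩, Real.sq_sqrt]
  exact (posSemidef_conjTranspose_mul_self A).eigenvalues_nonneg _

theorem sval_anti {i j : ℕ} (hi : 1 ≤ i) (hij : i ≤ j) : sval A j ≤ sval A i := by
  by_cases hjn : j ≤ n
  · rw [sval, sval, dif_pos ⟨hi.trans hij, hjn⟩, dif_pos ⟨hi, hij.trans hjn⟩]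
    exact Real.sqrt_le_sqrt (Tuple.monotone_sort (isHermitian_conjTranspose_mul_self A).eigenvalues
      (Fin.mk_le_mk.mpr (by omega)))
  · rw [sval_eq_zero A (by omega)]
    exact sval_nonneg A i

theorem card_eigenvalues_lt_sq_sval {j : ℕ} (hj1 : 1 ≤ j) (hjn : j ≤ n) :
    #{i | (isHermitian_conjTranspose_mul_self A).eigenvalues i < sval A j ^ 2} ≤ n - j := by
  rw [sq_sval A hj1 hjn]
  exact Tuple.card_lt_apply_sort _ _

theorem card_sq_sval_lt_eigenvalues {j : ℕ} (hj1 : 1 ≤ j) :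
    #{i | sval A j ^ 2 < (isHermitian_conjTranspose_mul_self A).eigenvalues i} ≤ j - 1 := by
  by_cases hjn : j ≤ n
  · have h := Tuple.card_apply_sort_lt (isHermitian_conjTranspose_mul_self A).eigenvalues
      ⟨n - j, by omega⟩
    rw [sq_sval A hj1 hjn]
    exact h.trans_eq (by simp only; omega)
  · exact (card_filter_le _ _).trans (by simp only [card_univ, Fintype.card_fin]; omega)

theorem sval_eq_zero_of_rank_lt {j : ℕ} (h : A.rank < j) : sval A j = 0 := by
  by_cases hj : 1 ≤ j ∧ j ≤ n
  swap
  · exact sval_eq_zero A hj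
  set hH := isHermitian_conjTranspose_mul_self A
  by_contra hne
  have hpos : 0 < sval A j ^ 2 := pow_pos ((sval_nonneg A j).lt_of_ne' hne) 2
  have hlarge : j ≤ #{i | sval A j ^ 2 ≤ hH.eigenvalues i} := by
    have := card_eigenvalues_lt_sq_sval A hj.1 hj.2
    have := card_filter_add_card_filter_not (s := univ)
      (fun i => hH.eigenvalues i < sval A j ^ 2)
    simp only [not_lt, card_univ, Fintype.card_fin] at this
    omega
  have hrank : A.rank = #{i | hH.eigenvalues i ≠ 0} := by
    rw [← rank_conjTranspose_mul_self, hH.rank_eq_card_non_zero_eigs, Fintype.card_subtype]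
  have hsub : #{i | sval A j ^ 2 ≤ hH.eigenvalues i} ≤ #{i | hH.eigenvalues i ≠ 0} :=
    card_le_card (monotone_filter_right _ fun i _ hi => (hpos.trans_le hi).ne')
  omega

end sval

theorem mul_sval_le_sval_of_contraction {a p b q : ℕ} (X : Matrix (Fin a) (Fin p) ℝ)
    (Y : Matrix (Fin b) (Fin q) ℝ) (P : Matrix (Fin q) (Fin p) ℝ) (c : ℝ)
    (hP : ∀ x, (P *ᵥ x) ⬝ᵥ (P *ᵥ x) ≤ x ⬝ᵥ x)
    (hXY : ∀ x, c ^ 2 * ((X *ᵥ x) ⬝ᵥ (X *ᵥ x)) ≤ (Y *ᵥ (P *ᵥ x)) ⬝ᵥ (Y *ᵥ (P *ᵥ x)))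
    (j : ℕ) : c * sval X j ≤ sval Y j := by
  by_cases hj : 1 ≤ j ∧ j ≤ p
  swap
  · rw [sval_eq_zero X hj, mul_zero]
    exact sval_nonneg Y j
  set hX := isHermitian_conjTranspose_mul_self X
  set hY := isHermitian_conjTranspose_mul_self Y
  obtain ⟨x, hx0, hx⟩ := exists_ne_zero_forall_dotProduct_eq_zero
    (Sum.elim (fun i : {i // hX.eigenvalues i < sval X j ^ 2} => ⇑(hX.eigenvectorBasis i))
      (fun i : {i // sval Y j ^ 2 < hY.eigenvalues i} => ⇑(hY.eigenvectorBasis i) ᵥ* P))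
    (by
      have := card_eigenvalues_lt_sq_sval X hj.1 hj.2
      have := card_sq_sval_lt_eigenvalues Y hj.1
      simp only [Fintype.card_sum, Fintype.card_subtype, Fintype.card_fin]
      omega)
  have hX_lower : sval X j ^ 2 * (x ⬝ᵥ x) ≤ (X *ᵥ x) ⬝ᵥ (X *ᵥ x) := by
    rw [← dotProduct_mulVec_conjTranspose_mul_self]
    exact hX.mul_dotProduct_self_le_dotProduct_mulVec fun i hi => hx (Sum.inl ⟨i, hi⟩)
  have hY_upper : (Y *ᵥ (P *ᵥ x)) ⬝ᵥ (Y *ᵥ (P *ᵥ x)) ≤ sval Y j ^ 2 * ((P *ᵥ x) ⬝ᵥ (P *ᵥ x)) := by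
    rw [← dotProduct_mulVec_conjTranspose_mul_self]
    refine hY.dotProduct_mulVec_le_mul_dotProduct_self fun i hi => ?_
    rw [dotProduct_mulVec]
    exact hx (Sum.inr ⟨i, hi⟩)
  have hx_pos : 0 < x ⬝ᵥ x := by
    simpa only [star_trivial] using dotProduct_star_self_pos_iff.mpr hx0
  refine le_of_sq_le_sq (le_of_mul_le_mul_right ?_ hx_pos) (sval_nonneg Y j)
  calc (c * sval X j) ^ 2 * (x ⬝ᵥ x) = c ^ 2 * (sval X j ^ 2 * (x ⬝ᵥ x)) := by ring
    _ ≤ c ^ 2 * ((X *ᵥ x) ⬝ᵥ (X *ᵥ x)) := mul_le_mul_of_nonneg_left hX_lower (sq_nonneg c)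
    _ ≤ (Y *ᵥ (P *ᵥ x)) ⬝ᵥ (Y *ᵥ (P *ᵥ x)) := hXY x
    _ ≤ sval Y j ^ 2 * ((P *ᵥ x) ⬝ᵥ (P *ᵥ x)) := hY_upper
    _ ≤ sval Y j ^ 2 * (x ⬝ᵥ x) := mul_le_mul_of_nonneg_left (hP x) (sq_nonneg _)

theorem Matrix.transpose_submatrix_one_mul_submatrix_one {α m n : Type*} [Fintype m]
    [DecidableEq m] [DecidableEq n] [NonAssocSemiring α] {e : n → m}
    (he : Function.Injective e) :
    ((1 : Matrix m m α).submatrix id e)ᵀ * (1 : Matrix m m α).submatrix id e = 1 := by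
  rw [transpose_submatrix, transpose_one, ← submatrix_mul _ _ _ _ _ Function.bijective_id,
    Matrix.mul_one, submatrix_one _ he]

theorem Matrix.dotProduct_self_diagonal_mulVec_le {n : Type*} [Fintype n] [DecidableEq n]
    {d : n → ℝ} (hd : ∀ i, |d i| ≤ 1) (x : n → ℝ) :
    (diagonal d *ᵥ x) ⬝ᵥ (diagonal d *ᵥ x) ≤ x ⬝ᵥ x := by
  simp only [mulVec_diagonal, dotProduct]
  refine sum_le_sum fun i _ => ?_
  have hdi : d i ^ 2 ≤ 1 := sq_le_one_iff_abs_le_one _ |>.mpr (hd i)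
  nlinarith [mul_self_nonneg (x i)]

theorem Matrix.mul_submatrix_one_id {α l m n : Type*} [Fintype m] [DecidableEq m]
    [NonAssocSemiring α] (M : Matrix l m α) (e : n → m) :
    M * (1 : Matrix m m α).submatrix id e = M.submatrix id e := by
  simpa using mul_submatrix_one (Equiv.refl m) e M

section svdSigma

variable {m n : ℕ} (A : Matrix (Fin m) (Fin n) ℝ)

theorem svdSigma_mul_submatrix_one_mul_diagonal {k : ℕ} (hkm : k ≤ m) (hkn : k ≤ n) :
    svdSigma A * (1 : Matrix (Fin n) (Fin n) ℝ).submatrix id (Fin.castLE hkn) *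
        diagonal (fun a : Fin k => sval A k / sval A (a + 1)) =
      sval A k • (1 : Matrix (Fin m) (Fin m) ℝ).submatrix id (Fin.castLE hkm) := by
  rw [mul_submatrix_one_id]
  ext i a
  simp only [mul_diagonal, submatrix_apply, svdSigma, of_apply, Matrix.smul_apply, one_apply,
    id_eq, Fin.ext_iff, Fin.val_castLE, smul_eq_mul]
  split_ifs with h
  · rw [h, mul_one]
    refine mul_div_cancel_of_imp' fun h0 => ?_
    exact le_antisymm (h0 ▸ sval_anti A (by omega) (by omega)) (sval_nonneg A k)
  · simp

theorem sq_sval_mul_le_svdSigma_mulVec {l : ℕ} (hl : l ≤ n) (w : Fin n → ℝ) :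
    sval A l ^ 2 * ((w ∘ Fin.castLE hl) ⬝ᵥ (w ∘ Fin.castLE hl)) ≤
      (svdSigma A *ᵥ w) ⬝ᵥ (svdSigma A *ᵥ w) := by
  by_cases hlm : l ≤ m
  swap
  · rw [sval_eq_zero_of_rank_lt A ((rank_le_height A).trans_lt (by omega)), zero_pow two_ne_zero,
      zero_mul]
    exact sum_nonneg fun i _ => mul_self_nonneg _
  have hentry : ∀ a : Fin l,
      (svdSigma A *ᵥ w) (Fin.castLE hlm a) = sval A (a + 1) * w (Fin.castLE hl a) := by
    intro a
    rw [mulVec, dotProduct, sum_eq_single (Fin.castLE hl a)]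
    · simp only [svdSigma, of_apply, Fin.val_castLE, if_true]
    · intro b _ hb
      simp only [svdSigma, of_apply, Fin.val_castLE, ite_mul, zero_mul, ite_eq_right_iff]
      intro h
      exact absurd (Fin.ext (by rw [Fin.val_castLE, h])) hb
    · simp
  calc sval A l ^ 2 * ((w ∘ Fin.castLE hl) ⬝ᵥ (w ∘ Fin.castLE hl))
      = ∑ a : Fin l, sval A l ^ 2 * w (Fin.castLE hl a) ^ 2 := by
        simp only [dotProduct, mul_sum, Function.comp_apply, sq]
    _ ≤ ∑ a : Fin l, (svdSigma A *ᵥ w) (Fin.castLE hlm a) ^ 2 := by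
        refine sum_le_sum fun a _ => ?_
        rw [hentry, mul_pow]
        have hσ := sval_anti A (i := a + 1) (j := l) (by omega) (by omega)
        exact mul_le_mul_of_nonneg_right (pow_le_pow_left₀ (sval_nonneg A l) hσ 2) (sq_nonneg _)
    _ = ∑ i ∈ univ.map (Fin.castLEEmb hlm), (svdSigma A *ᵥ w) i ^ 2 :=
        (sum_map univ (Fin.castLEEmb hlm) fun i => (svdSigma A *ᵥ w) i ^ 2).symm
    _ ≤ ∑ i, (svdSigma A *ᵥ w) i ^ 2 := sum_le_univ_sum_of_nonneg fun i => sq_nonneg _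
    _ = (svdSigma A *ᵥ w) ⬝ᵥ (svdSigma A *ᵥ w) := by simp only [dotProduct, sq]

end svdSigma

theorem sval_mul_sval_lead_le_sval_mul_left {m n r : ℕ} {A : Matrix (Fin m) (Fin n) ℝ}
    {S : Matrix (Fin m) (Fin m) ℝ} {T : Matrix (Fin n) (Fin n) ℝ} (hT : Tᵀ * T = 1)
    (hA : A = S * svdSigma A * Tᵀ) (F : Matrix (Fin r) (Fin m) ℝ) {k : ℕ} (hk : k ≤ m)
    (j : ℕ) : sval A k * sval (lead (F * S) r k le_rfl hk) j ≤ sval (F * A) j := by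
  by_cases hkn : k ≤ n
  swap
  · rw [sval_eq_zero A (by omega), zero_mul]
    exact sval_nonneg _ j
  set E := (1 : Matrix (Fin n) (Fin n) ℝ).submatrix id (Fin.castLE hkn)
  set d : Fin k → ℝ := fun a => sval A k / sval A (a + 1)
  have hd : ∀ a, |d a| ≤ 1 := fun a => by
    rw [abs_of_nonneg (div_nonneg (sval_nonneg A k) (sval_nonneg A _))]
    exact div_le_one_of_le₀ (sval_anti A (by omega) (by omega)) (sval_nonneg A _)
  have hFA : F * A * (T * E * diagonal d) = sval A k • lead (F * S) r k le_rfl hk := by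
    calc F * A * (T * E * diagonal d) = F * S * (svdSigma A * (Tᵀ * T) * E * diagonal d) := by
          conv_lhs => rw [hA]
          simp only [Matrix.mul_assoc]
      _ = F * S * (sval A k • (1 : Matrix (Fin m) (Fin m) ℝ).submatrix id (Fin.castLE hk)) := by
          rw [hT, Matrix.mul_one, svdSigma_mul_submatrix_one_mul_diagonal]
      _ = sval A k • lead (F * S) r k le_rfl hk := by
          rw [Matrix.mul_smul, mul_submatrix_one_id]
          rfl
  refine mul_sval_le_sval_of_contraction _ _ (T * E * diagonal d) _ (fun x => ?_) (fun x => ?_)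
    j
  · rw [← mulVec_mulVec, ← mulVec_mulVec, dotProduct_self_mulVec_of_transpose_mul_self hT,
      dotProduct_self_mulVec_of_transpose_mul_self
        (transpose_submatrix_one_mul_submatrix_one (Fin.castLE_injective hkn))]
    exact dotProduct_self_diagonal_mulVec_le hd x
  · rw [mulVec_mulVec, hFA, smul_mulVec, smul_dotProduct, dotProduct_smul, smul_eq_mul,
      smul_eq_mul, sq, mul_assoc]

theorem sval_mul_sval_lead_le_sval_mul_right {m n r : ℕ} {A : Matrix (Fin m) (Fin n) ℝ}
    {S : Matrix (Fin m) (Fin m) ℝ} {T : Matrix (Fin n) (Fin n) ℝ} (hS : Sᵀ * S = 1)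
    (hA : A = S * svdSigma A * Tᵀ) (H : Matrix (Fin n) (Fin r) ℝ) {l : ℕ} (hl : l ≤ n)
    (j : ℕ) : sval A l * sval (lead (Tᵀ * H) l r hl le_rfl) j ≤ sval (A * H) j := by
  refine mul_sval_le_sval_of_contraction _ _ 1 _ (fun x => by rw [one_mulVec]) (fun x => ?_) j
  have hAH : (A * H) *ᵥ x = S *ᵥ (svdSigma A *ᵥ ((Tᵀ * H) *ᵥ x)) := by
    conv_lhs => rw [hA]
    simp only [mulVec_mulVec, Matrix.mul_assoc]
  rw [one_mulVec, hAH, dotProduct_self_mulVec_of_transpose_mul_self hS]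
  exact sq_sval_mul_le_svdSigma_mulVec A hl ((Tᵀ * H) *ᵥ x)

theorem singularValue_product_bounds_general {m n r : ℕ} (A : Matrix (Fin m) (Fin n) ℝ)
    (S : Matrix (Fin m) (Fin m) ℝ) (T : Matrix (Fin n) (Fin n) ℝ)
    (hS : Sᵀ * S = 1) (hT : Tᵀ * T = 1) (hA : A = S * svdSigma A * Tᵀ)
    (F : Matrix (Fin r) (Fin m) ℝ) (H : Matrix (Fin n) (Fin r) ℝ) :
    (∀ k (_ : 1 ≤ k) (hk : k ≤ m) (j : ℕ),
      sval A k * sval (lead (F * S) r k le_rfl hk) j ≤ sval (F * A) j) ∧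
    (∀ l (_ : 1 ≤ l) (hl : l ≤ n) (j : ℕ),
      sval A l * sval (lead (Tᵀ * H) l r hl le_rfl) j ≤ sval (A * H) j) :=
  ⟨fun _ _ hk j => sval_mul_sval_lead_le_sval_mul_left hT hA F hk j,
    fun _ _ hl j => sval_mul_sval_lead_le_sval_mul_right hS hA H hl j⟩

/-- Singular values of products: `σ_j(FA) ≥ σ_k(A)·σ_j(F̂_{r,k})` and
`σ_j(AH) ≥ σ_l(A)·σ_j(Ĥ_{l,r})`, where `F̂ = F S_A`, `Ĥ = T_Aᵀ H`. -/
theorem singularValue_product_bounds {m n r : ℕ} (A : Matrix (Fin m) (Fin n) ℝ)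
    (ρ : ℕ) (hρ : A.rank = ρ)
    (S : Matrix (Fin m) (Fin m) ℝ) (T : Matrix (Fin n) (Fin n) ℝ)
    (hS : Sᵀ * S = 1) (hT : Tᵀ * T = 1) (hA : A = S * svdSigma A * Tᵀ)
    (F : Matrix (Fin r) (Fin m) ℝ) (H : Matrix (Fin n) (Fin r) ℝ) (hr : r ≤ ρ) :
    (∀ k (_ : 1 ≤ k) (hk : k ≤ m) (j : ℕ),
      sval A k * sval (lead (F * S) r k le_rfl hk) j ≤ sval (F * A) j) ∧
    (∀ l (_ : 1 ≤ l) (hl : l ≤ n) (j : ℕ),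
      sval A l * sval (lead (Tᵀ * H) l r hl le_rfl) j ≤ sval (A * H) j) :=
  singularValue_product_bounds_general A S T hS hT hA F H
end
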